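/- Assume (H0) and let p ∈ {1,…,n−1}. Suppose the p×p matrix [δ_{ij} μ_i − |a_{ij}|] (1 ≤ i,j ≤ p) is a non-singular M-matrix. Let (x(t), u(t)) be a positive solution of (E) such that x_q(t) → 0 as t → ∞ for every q = p+1,…,n. Then (x(t), u(t)) is bounded on [0,∞), i.e., sup_{t ≥ 0} x_i(t) < ∞ and sup_{t ≥ 0} u_i(t) < ∞ for all i = 1,…,n. -/

import Mathlib

open MeasureTheory Filter Topology

noncomputable section

/-- A P-matrix: all principal minors are positive. -/
def IsPMatrix {m : ℕ} (B : Matrix (Fin m) (Fin m) ℝ) : Prop :=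
  ∀ S : Finset (Fin m), S.Nonempty →
    0 < (B.submatrix (fun i : {y // y ∈ S} => (i : Fin m))
          (fun j : {y // y ∈ S} => (j : Fin m))).det

/-- A non-singular M-matrix: nonpositive off-diagonal entries and all principal
minors positive. -/
def IsNonsingularMMatrix {m : ℕ} (B : Matrix (Fin m) (Fin m) ℝ) : Prop :=
  (∀ i j, i ≠ j → B i j ≤ 0) ∧ IsPMatrix B

/-- Hypothesis (H0) on the coefficients and the kernels of system (E). -/
def H0 (n : ℕ) (μ c d e : Fin n → ℝ) (K : Fin n → Fin n → ℝ → ℝ)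
    (G : Fin n → ℝ → ℝ) : Prop :=
  (∀ i, 0 < μ i) ∧ (∀ i, 0 ≤ c i) ∧ (∀ i, 0 < d i) ∧ (∀ i, 0 < e i) ∧
  (∀ i j s, (0:ℝ) ≤ s → 0 ≤ K i j s) ∧ (∀ i s, (0:ℝ) ≤ s → 0 ≤ G i s) ∧
  (∀ i j, IntegrableOn (K i j) (Set.Ioi 0)) ∧ (∀ i, IntegrableOn (G i) (Set.Ioi 0)) ∧
  (∀ i j, ∫ s in Set.Ioi (0:ℝ), K i j s = 1) ∧ (∀ i, ∫ s in Set.Ioi (0:ℝ), G i s = 1) ∧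
  (∀ i j, IntegrableOn (fun s => s * K i j s) (Set.Ioi 0)) ∧
  (∀ i, IntegrableOn (fun s => s * G i s) (Set.Ioi 0))

/-- A positive solution of the controlled Lotka–Volterra system (E): continuous
functions, nonnegative and bounded on `(-∞,0]`, positive on `[0,∞)`, satisfying
the delay differential equations for `t > 0`. -/
def IsPositiveSolution (n : ℕ) (b : Fin n → ℝ) (a : Fin n → Fin n → ℝ)
    (μ c d e : Fin n → ℝ) (K : Fin n → Fin n → ℝ → ℝ) (G : Fin n → ℝ → ℝ)
    (x u : Fin n → ℝ → ℝ) : Prop :=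
  (∀ i, Continuous (x i)) ∧ (∀ i, Continuous (u i)) ∧
  (∀ i t, t ≤ (0:ℝ) → 0 ≤ x i t) ∧ (∀ i t, t ≤ (0:ℝ) → 0 ≤ u i t) ∧
  (∀ i, ∃ C, ∀ t ≤ (0:ℝ), x i t ≤ C) ∧ (∀ i, ∃ C, ∀ t ≤ (0:ℝ), u i t ≤ C) ∧
  (∀ i t, (0:ℝ) ≤ t → 0 < x i t) ∧ (∀ i t, (0:ℝ) ≤ t → 0 < u i t) ∧
  (∀ i t, (0:ℝ) < t → HasDerivAt (x i)
      (x i t * (b i - μ i * x i t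
        - (∑ j, a i j * ∫ s in Set.Ioi (0:ℝ), K i j s * x j (t - s))
        - c i * ∫ s in Set.Ioi (0:ℝ), G i s * u i (t - s))) t) ∧
  (∀ i t, (0:ℝ) < t → HasDerivAt (u i) (-(e i) * u i t + d i * x i t) t)

/-- A saturated equilibrium of (E): `x* ≥ 0`, `u_i* = (d_i/e_i) x_i*`, and for each
`i` either `x_i* > 0` and `(M x*)_i = b_i`, or `x_i* = 0` and `(M x*)_i ≥ b_i`,
where `M = [δ_ij λ_i + a_ij]` with `λ_i = μ_i + c_i d_i / e_i`. -/
def IsSaturatedEquilibrium (n : ℕ) (b : Fin n → ℝ) (a : Fin n → Fin n → ℝ)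
    (μ c d e : Fin n → ℝ) (xs us : Fin n → ℝ) : Prop :=
  (∀ i, 0 ≤ xs i) ∧ (∀ i, us i = d i / e i * xs i) ∧
  ∀ i, (0 < xs i ∧ (μ i + c i * d i / e i) * xs i + (∑ j, a i j * xs j) = b i) ∨
       (xs i = 0 ∧ b i ≤ (μ i + c i * d i / e i) * xs i + (∑ j, a i j * xs j))



/-!
The M-matrix hypothesis yields, by induction on `p` through the Schur complement of the pivot
entry, a weight `v > 0` with `μ_i v_i > ∑_{j<p} |a_ij| v_j` for the first `p` species. The other
species tend to `0`, so they are bounded. For `L` large the barrier `x_i ≤ L v_i` (`i < p`) can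
never be crossed: at a first contact every delayed term is controlled by the barrier values, which
makes the per-capita growth rate of `x_i` negative. Once `x` is bounded, `u' = -e u + d x` keeps
`u` below a barrier by the same first-contact argument.
-/
section MMatrix

open Matrix

variable {m : ℕ}

theorem isPMatrix_iff_det_submatrix_pos {A : Matrix (Fin m) (Fin m) ℝ} :
    IsPMatrix A ↔ ∀ k (f : Fin k → Fin m), Function.Injective f → 0 < k →
      0 < (A.submatrix f f).det := by
  constructor
  · intro hA k f hf hk
    let g : Fin k ≃ {y // y ∈ Finset.univ.image f} :=
      Equiv.ofBijective (fun i => ⟨f i, Finset.mem_image_of_mem f (Finset.mem_univ i)⟩)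
        ⟨fun i j hij => hf (congrArg Subtype.val hij), fun ⟨y, hy⟩ => by
          obtain ⟨i, -, rfl⟩ := Finset.mem_image.mp hy
          exact ⟨i, rfl⟩⟩
    have := hA _ ⟨f ⟨0, hk⟩, Finset.mem_image_of_mem f (Finset.mem_univ _)⟩
    rwa [← det_submatrix_equiv_self g] at this
  · intro hA S hS
    let e := S.orderIsoOfFin rfl
    have := hA S.card (fun i => e i) (Subtype.val_injective.comp e.injective) hS.card_pos
    rwa [← det_submatrix_equiv_self e.toEquiv]

theorem IsPMatrix.diag_pos {A : Matrix (Fin m) (Fin m) ℝ} (hA : IsPMatrix A) (i : Fin m) :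
    0 < A i i := by
  simpa using isPMatrix_iff_det_submatrix_pos.mp hA 1 (fun _ => i)
    (fun _ _ _ => Subsingleton.elim _ _) one_pos

def Matrix.pivotSchurCompl (A : Matrix (Fin (m + 1)) (Fin (m + 1)) ℝ) : Matrix (Fin m) (Fin m) ℝ :=
  of fun i j => A i.succ j.succ - A i.succ 0 * A 0 j.succ / A 0 0

theorem Matrix.det_eq_mul_det_pivotSchurCompl (A : Matrix (Fin (m + 1)) (Fin (m + 1)) ℝ)
    (h : A 0 0 ≠ 0) : A.det = A 0 0 * (pivotSchurCompl A).det := by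
  let c : Fin (m + 1) → ℝ := Fin.cons 0 fun i => A i.succ 0 / A 0 0
  let B : Matrix (Fin (m + 1)) (Fin (m + 1)) ℝ := of fun i j => A i j - c i * A 0 j
  have hAB : A.det = B.det :=
    det_eq_of_forall_row_eq_smul_add_const c 0 rfl fun i j => by simp [B, c]
  have hB0 : ∀ i : Fin m, B i.succ 0 = 0 := fun i => by simp [B, c]; field_simp; ring
  rw [hAB, det_succ_column_zero, Fin.sum_univ_succ]
  simp only [hB0, mul_zero, zero_mul, Finset.sum_const_zero, add_zero]
  congr 2
  · simp [B, c]
  · ext i j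
    simp [B, c, pivotSchurCompl, div_mul_eq_mul_div]

theorem Matrix.pivotSchurCompl_submatrix_cons {k : ℕ} (A : Matrix (Fin (m + 1)) (Fin (m + 1)) ℝ)
    (g : Fin k → Fin m) :
    pivotSchurCompl (A.submatrix (Fin.cons 0 (Fin.succ ∘ g)) (Fin.cons 0 (Fin.succ ∘ g))) =
      (pivotSchurCompl A).submatrix g g := by
  ext i j
  simp [pivotSchurCompl]

theorem IsPMatrix.pivotSchurCompl {A : Matrix (Fin (m + 1)) (Fin (m + 1)) ℝ}
    (hA : IsPMatrix A) : IsPMatrix (pivotSchurCompl A) := by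
  rw [isPMatrix_iff_det_submatrix_pos] at hA ⊢
  intro k g hg hk
  let f : Fin (k + 1) → Fin (m + 1) := Fin.cons 0 (Fin.succ ∘ g)
  have hf : Function.Injective f :=
    Fin.cons_injective_iff.mpr ⟨fun ⟨i, hi⟩ => Fin.succ_ne_zero _ hi,
      (Fin.succ_injective _).comp hg⟩
  have hpivot : 0 < (A.submatrix f f) 0 0 := by
    simpa [f] using hA 1 (fun _ => 0) (fun _ _ _ => Subsingleton.elim _ _) one_pos
  have hdet := hA _ f hf k.succ_pos
  rw [det_eq_mul_det_pivotSchurCompl _ hpivot.ne', pivotSchurCompl_submatrix_cons] at hdet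
  exact pos_of_mul_pos_right hdet hpivot.le

theorem IsNonsingularMMatrix.pivotSchurCompl {A : Matrix (Fin (m + 1)) (Fin (m + 1)) ℝ}
    (hA : IsNonsingularMMatrix A) : IsNonsingularMMatrix (pivotSchurCompl A) := by
  obtain ⟨hZ, hP⟩ := hA
  refine ⟨fun i j hij => ?_, hP.pivotSchurCompl⟩
  have hcorr : 0 ≤ A i.succ 0 * A 0 j.succ / A 0 0 :=
    div_nonneg (mul_nonneg_of_nonpos_of_nonpos (hZ _ _ (Fin.succ_ne_zero i))
      (hZ _ _ (Fin.succ_ne_zero j).symm)) (hP.diag_pos 0).le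
  have := hZ _ _ (Fin.succ_injective _ |>.ne hij)
  simp only [Matrix.pivotSchurCompl, of_apply]
  linarith

theorem IsNonsingularMMatrix.exists_pos_mulVec_pos {A : Matrix (Fin m) (Fin m) ℝ}
    (hA : IsNonsingularMMatrix A) : ∃ v : Fin m → ℝ, (∀ i, 0 < v i) ∧ ∀ i, 0 < (A *ᵥ v) i := by
  induction m with
  | zero => exact ⟨0, finZeroElim, finZeroElim⟩
  | succ m ih =>
    obtain ⟨w, hw, hSw⟩ := ih hA.pivotSchurCompl
    obtain ⟨hZ, hP⟩ := hA
    have hpivot := hP.diag_pos 0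
    set q := ∑ j : Fin m, A 0 j.succ * w j
    have hq : q ≤ 0 := Finset.sum_nonpos fun j _ =>
      mul_nonpos_of_nonpos_of_nonneg (hZ _ _ (Fin.succ_ne_zero j).symm) (hw j).le
    -- `v = (v₀, w)` with `A 0 0 * v₀ + q = ε`: row `i.succ` of `A *ᵥ v` is then
    -- `(S *ᵥ w) i + A i.succ 0 * ε / A 0 0`, positive for `ε` small.
    have hsmall : ∀ᶠ ε in 𝓝 (0 : ℝ),
        ∀ i, 0 < (A.pivotSchurCompl *ᵥ w) i + A i.succ 0 * ε / A 0 0 :=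
      eventually_all.mpr fun i =>
        (Continuous.tendsto (by fun_prop) 0).eventually_const_lt (by simpa using hSw i)
    obtain ⟨ε, hε, hεpos⟩ := ((hsmall.filter_mono nhdsWithin_le_nhds).and
      (self_mem_nhdsWithin : ∀ᶠ ε in 𝓝[>] (0 : ℝ), 0 < ε)).exists
    refine ⟨Fin.cons ((ε - q) / A 0 0) w, Fin.cases ?_ hw, Fin.cases ?_ fun i => ?_⟩
    · simpa using div_pos (by linarith) hpivot
    · simp only [mulVec, dotProduct, Fin.sum_univ_succ, Fin.cons_zero, Fin.cons_succ]
      rw [mul_div_cancel₀ _ hpivot.ne']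
      linarith
    · have hrow : ∑ j, A i.succ 0 * A 0 j.succ / A 0 0 * w j = A i.succ 0 / A 0 0 * q := by
        rw [Finset.mul_sum]
        exact Finset.sum_congr rfl fun j _ => by ring
      convert hε i using 1
      simp only [mulVec, dotProduct, Fin.sum_univ_succ, Fin.cons_zero, Fin.cons_succ,
        Matrix.pivotSchurCompl, of_apply, sub_mul, Finset.sum_sub_distrib, hrow]
      field_simp
      ring

end MMatrix

theorem HasDerivAt.nonneg_of_forall_lt_le {f : ℝ → ℝ} {D t : ℝ} (hf : HasDerivAt f D t)
    (hmax : ∀ s < t, f s ≤ f t) : 0 ≤ D := by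
  by_contra! hD
  obtain ⟨s, hslope, hs⟩ :=
    (((hf.hasDerivWithinAt (s := Set.Iio t)).limsup_slope_le' (lt_irrefl t) hD).and
      self_mem_nhdsWithin).exists
  rw [slope_def_field] at hslope
  exact hslope.not_ge (div_nonneg_of_nonpos (sub_nonpos.mpr (hmax s hs)) (sub_nonpos.mpr hs.le))

theorem forall_le_of_hasDerivAt_neg_at_contact {ι : Type*} [Finite ι] {f : ι → ℝ → ℝ}
    {M : ι → ℝ} (hf : ∀ i, Continuous (f i)) (hpast : ∀ i t, t ≤ 0 → f i t ≤ M i)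
    (hzero : ∀ i, f i 0 < M i)
    (hcontact : ∀ i t, 0 < t → f i t = M i → (∀ j s, s ≤ t → f j s ≤ M j) →
      ∃ D < 0, HasDerivAt (f i) D t) :
    ∀ i t, f i t ≤ M i := by
  by_contra! hcross
  obtain ⟨i₁, t₁, ht₁⟩ := hcross
  set T := Set.Ici 0 ∩ ⋃ i, {t | M i ≤ f i t}
  have hT : IsClosed T :=
    isClosed_Ici.inter (isClosed_iUnion_of_finite fun i => isClosed_le continuous_const (hf i))
  have hbdd : BddBelow T := ⟨0, fun t ht => ht.1⟩
  have hne : T.Nonempty := by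
    refine ⟨t₁, Set.mem_Ici.mpr ?_, Set.mem_iUnion.mpr ⟨i₁, ht₁.le⟩⟩
    by_contra! h
    exact (hpast i₁ t₁ h.le).not_gt ht₁
  obtain ⟨ht₀, ht₀T⟩ := hT.csInf_mem hne hbdd
  obtain ⟨i, hi⟩ := Set.mem_iUnion.mp ht₀T
  set t₀ := sInf T
  have hbefore : ∀ j, ∀ s < t₀, f j s ≤ M j := by
    intro j s hs
    rcases le_or_gt s 0 with hs0 | hs0
    · exact hpast j s hs0
    · by_contra! h
      exact (csInf_le hbdd ⟨hs0.le, Set.mem_iUnion.mpr ⟨j, h.le⟩⟩).not_gt hs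
  have hupto : ∀ j, ∀ s ≤ t₀, f j s ≤ M j := by
    intro j s hs
    have : closure (Set.Iio t₀) ⊆ {s | f j s ≤ M j} :=
      (isClosed_le (hf j) continuous_const).closure_subset_iff.mpr (hbefore j)
    rw [closure_Iio] at this
    exact this hs
  have hpos : 0 < t₀ := ht₀.lt_of_ne fun h => (hzero i).not_ge (h ▸ hi)
  have heq : f i t₀ = M i := (hupto i t₀ le_rfl).antisymm hi
  obtain ⟨D, hD, hderiv⟩ := hcontact i t₀ hpos heq hupto
  exact hD.not_ge (hderiv.nonneg_of_forall_lt_le fun s hs => heq ▸ hbefore i s hs)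

open Set in
theorem setIntegral_mul_comp_sub_le {k f : ℝ → ℝ} {t W : ℝ} (hk0 : ∀ s, 0 ≤ s → 0 ≤ k s)
    (hk : IntegrableOn k (Ioi 0)) (hk1 : ∫ s in Ioi 0, k s = 1)
    (hf0 : ∀ s < t, 0 ≤ f s) (hfW : ∀ s < t, f s ≤ W) :
    ∫ s in Ioi 0, k s * f (t - s) ≤ W := by
  have hpt : ∀ s ∈ Ioi (0 : ℝ), 0 ≤ k s * f (t - s) ∧ k s * f (t - s) ≤ W * k s := fun s hs =>
    have hts : t - s < t := sub_lt_self t hs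
    ⟨mul_nonneg (hk0 s (le_of_lt hs)) (hf0 _ hts),
      by rw [mul_comm W]; exact mul_le_mul_of_nonneg_left (hfW _ hts) (hk0 s (le_of_lt hs))⟩
  calc ∫ s in Ioi 0, k s * f (t - s) ≤ ∫ s in Ioi 0, W * k s :=
        integral_mono_of_nonneg
          ((ae_restrict_iff' measurableSet_Ioi).mpr (ae_of_all _ fun s hs => (hpt s hs).1))
          (hk.const_mul W)
          ((ae_restrict_iff' measurableSet_Ioi).mpr (ae_of_all _ fun s hs => (hpt s hs).2))
    _ = W := by rw [integral_const_mul, hk1, mul_one]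

theorem exists_forall_lt_of_tendsto {f : ℝ → ℝ} {l : ℝ} (hf : Continuous f)
    (hpast : ∃ C, ∀ t ≤ 0, f t ≤ C) (hlim : Tendsto f atTop (𝓝 l)) : ∃ B, ∀ t, f t < B := by
  obtain ⟨C, hC⟩ := hpast
  obtain ⟨T, hT⟩ := eventually_atTop.mp (hlim.eventually (gt_mem_nhds (lt_add_one l)))
  obtain ⟨C', hC'⟩ := (isCompact_Icc (a := 0) (b := T)).bddAbove_image hf.continuousOn
  refine ⟨max C (max C' (l + 1)) + 1, fun t => lt_of_le_of_lt ?_ (lt_add_one _)⟩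
  rcases le_or_gt t 0 with h0 | h0
  · exact (hC t h0).trans (le_max_left _ _)
  rcases le_or_gt t T with hT' | hT'
  · exact (hC' ⟨t, ⟨h0.le, hT'⟩, rfl⟩).trans ((le_max_left _ _).trans (le_max_right _ _))
  · exact (hT t hT'.le).le.trans ((le_max_right _ _).trans (le_max_right _ _))

theorem exists_forall_le_of_hasDerivAt_linear {u y : ℝ → ℝ} {α β Cy : ℝ} (hα : 0 < α)
    (hβ : 0 ≤ β) (hu : Continuous u) (hpast : ∃ C, ∀ t ≤ 0, u t ≤ C)
    (hy : ∀ t, 0 < t → y t ≤ Cy) (hderiv : ∀ t, 0 < t → HasDerivAt u (-α * u t + β * y t) t) :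
    ∃ C, ∀ t, u t ≤ C := by
  obtain ⟨C, hC⟩ := hpast
  set M := max C (β * Cy / α) + 1
  have hM : β * Cy < α * M := by
    have := (div_lt_iff₀' hα).mp ((le_max_right C _).trans_lt (lt_add_one _) : β * Cy / α < M)
    linarith
  refine ⟨M, forall_le_of_hasDerivAt_neg_at_contact (ι := Unit) (f := fun _ => u)
    (M := fun _ => M)
    (fun _ => hu) (fun _ t ht => (hC t ht).trans ((le_max_left _ _).trans (lt_add_one _).le))
    (fun _ => (hC 0 le_rfl).trans_lt ((le_max_left _ _).trans_lt (lt_add_one _)))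
    (fun _ t ht hut _ => ⟨_, ?_, hderiv t ht⟩) ()⟩
  rw [hut]
  nlinarith [mul_le_mul_of_nonneg_left (hy t ht) hβ]

open Set in
theorem H0.neg_delay_terms_le {n : ℕ} {μ c d e : Fin n → ℝ} {K : Fin n → Fin n → ℝ → ℝ}
    {G : Fin n → ℝ → ℝ} (hH0 : H0 n μ c d e K G) (a : Fin n → Fin n → ℝ)
    {x u : Fin n → ℝ → ℝ} {V : Fin n → ℝ} {t : ℝ} (i : Fin n) (hx0 : ∀ j s, 0 ≤ x j s)
    (hu0 : ∀ s, 0 ≤ u i s) (hV : ∀ j, ∀ s < t, x j s ≤ V j) :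
    -(∑ j, a i j * ∫ s in Ioi 0, K i j s * x j (t - s)) - c i * ∫ s in Ioi 0, G i s * u i (t - s)
      ≤ ∑ j, |a i j| * V j := by
  obtain ⟨-, hc, -, -, hK0, hG0, hKint, -, hK1, -⟩ := hH0
  have hG : 0 ≤ c i * ∫ s in Ioi 0, G i s * u i (t - s) :=
    mul_nonneg (hc i) (setIntegral_nonneg measurableSet_Ioi fun s hs =>
      mul_nonneg (hG0 i s (le_of_lt hs)) (hu0 _))
  have hK : -(∑ j, a i j * ∫ s in Ioi 0, K i j s * x j (t - s)) ≤ ∑ j, |a i j| * V j := by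
    rw [← Finset.sum_neg_distrib]
    refine Finset.sum_le_sum fun j _ => ?_
    have hI : 0 ≤ ∫ s in Ioi 0, K i j s * x j (t - s) := setIntegral_nonneg measurableSet_Ioi
      fun s hs => mul_nonneg (hK0 i j s (le_of_lt hs)) (hx0 _ _)
    calc -(a i j * ∫ s in Ioi 0, K i j s * x j (t - s))
        = -a i j * ∫ s in Ioi 0, K i j s * x j (t - s) := by ring
      _ ≤ |a i j| * ∫ s in Ioi 0, K i j s * x j (t - s) :=
        mul_le_mul_of_nonneg_right (neg_le_abs _) hI
      _ ≤ |a i j| * V j := mul_le_mul_of_nonneg_left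
        (setIntegral_mul_comp_sub_le (hK0 i j) (hKint i j) (hK1 i j) (fun s _ => hx0 j s) (hV j))
        (abs_nonneg _)
  linarith

namespace IsPositiveSolution

variable {n : ℕ} {b : Fin n → ℝ} {a : Fin n → Fin n → ℝ} {μ c d e : Fin n → ℝ}
  {K : Fin n → Fin n → ℝ → ℝ} {G : Fin n → ℝ → ℝ} {x u : Fin n → ℝ → ℝ}

theorem x_nonneg (hsol : IsPositiveSolution n b a μ c d e K G x u) (i : Fin n) (t : ℝ) :
    0 ≤ x i t := by
  obtain ⟨-, -, hxpast, -, -, -, hxpos, -⟩ := hsol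
  exact (le_or_gt t 0).elim (hxpast i t) fun ht => (hxpos i t ht.le).le

theorem u_nonneg (hsol : IsPositiveSolution n b a μ c d e K G x u) (i : Fin n) (t : ℝ) :
    0 ≤ u i t := by
  obtain ⟨-, -, -, hupast, -, -, -, hupos, -⟩ := hsol
  exact (le_or_gt t 0).elim (hupast i t) fun ht => (hupos i t ht.le).le

end IsPositiveSolution

theorem IsPositiveSolution.exists_forall_le_of_weighted_dominance {p k : ℕ}
    {b : Fin (p + k) → ℝ} {a : Fin (p + k) → Fin (p + k) → ℝ} {μ c d e : Fin (p + k) → ℝ}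
    {K : Fin (p + k) → Fin (p + k) → ℝ → ℝ} {G : Fin (p + k) → ℝ → ℝ}
    {x u : Fin (p + k) → ℝ → ℝ} (hH0 : H0 (p + k) μ c d e K G)
    (hsol : IsPositiveSolution (p + k) b a μ c d e K G x u) {v : Fin p → ℝ} (hv : ∀ i, 0 < v i)
    (hdom : ∀ i : Fin p,
      ∑ j : Fin p, |a (Fin.castAdd k i) (Fin.castAdd k j)| * v j < μ (Fin.castAdd k i) * v i)
    (hext : ∀ j : Fin k, ∃ B, ∀ t, x (Fin.natAdd p j) t < B) :
    ∃ V : Fin (p + k) → ℝ, ∀ i t, x i t ≤ V i := by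
  have hx0 := hsol.x_nonneg
  have hu0 := hsol.u_nonneg
  obtain ⟨hxc, -, -, -, hxpast, -, hxpos, -, hxderiv, -⟩ := hsol
  choose B hB using hext
  choose C hC using hxpast
  -- `L` large beats the past of `x` and, on the barrier `x i = L * v i`, the growth rate of `x i`.
  obtain ⟨L, hL⟩ := (eventually_all.mpr fun i : Fin p =>
    ((tendsto_id.atTop_mul_const (hv i)).eventually_gt_atTop (C (Fin.castAdd k i))).and
      ((tendsto_id.atTop_mul_const (sub_pos.mpr (hdom i))).eventually_gt_atTop
        (b (Fin.castAdd k i) + ∑ j : Fin k, |a (Fin.castAdd k i) (Fin.natAdd p j)| * B j))).exists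
  set V : Fin (p + k) → ℝ := Fin.append (fun i => L * v i) B
  have hpast : ∀ i, ∀ t ≤ 0, x i t < V i := by
    intro i t ht
    cases i using Fin.addCases with
    | left i => simpa [V] using (hC _ t ht).trans_lt (hL i).1
    | right j => simpa [V] using hB j t
  refine ⟨V, forall_le_of_hasDerivAt_neg_at_contact hxc (fun i t ht => (hpast i t ht).le)
    (fun i => hpast i 0 le_rfl) ?_⟩
  intro i t ht hcontact hbelow
  cases i using Fin.addCases with
  | right j => exact ((hB j t).ne (by simpa [V] using hcontact)).elim
  | left i =>
      refine ⟨_, mul_neg_of_pos_of_neg (hxpos _ t ht.le) ?_, hxderiv _ t ht⟩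
      have hdelay := hH0.neg_delay_terms_le a (Fin.castAdd k i) hx0 (hu0 _)
        fun j s hs => hbelow j s hs.le
      have hV : ∑ j, |a (Fin.castAdd k i) j| * V j =
          L * ∑ j : Fin p, |a (Fin.castAdd k i) (Fin.castAdd k j)| * v j
            + ∑ j : Fin k, |a (Fin.castAdd k i) (Fin.natAdd p j)| * B j := by
        simp [V, Fin.sum_univ_add, Finset.mul_sum, mul_left_comm]
      have hxi : x (Fin.castAdd k i) t = L * v i := by simpa [V] using hcontact
      have hrate := (hL i).2
      rw [id] at hrate
      rw [hxi]
      linarith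

theorem statement11_general (n p : ℕ) (hpn : p < n)
    (b : Fin n → ℝ) (a : Fin n → Fin n → ℝ)
    (μ c d e : Fin n → ℝ) (K : Fin n → Fin n → ℝ → ℝ) (G : Fin n → ℝ → ℝ)
    (hH0 : H0 n μ c d e K G)
    (hM : IsNonsingularMMatrix (Matrix.of fun i j : Fin p =>
      (if i = j then μ (Fin.castLE hpn.le i) else 0) -
        |a (Fin.castLE hpn.le i) (Fin.castLE hpn.le j)|))
    (x u : Fin n → ℝ → ℝ)
    (hsol : IsPositiveSolution n b a μ c d e K G x u)
    (hext : ∀ q : Fin n, p ≤ (q : ℕ) →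
      Filter.Tendsto (x q) Filter.atTop (nhds 0)) :
    ∀ i, (∃ C, ∀ t, (0:ℝ) ≤ t → x i t ≤ C) ∧
         (∃ C, ∀ t, (0:ℝ) ≤ t → u i t ≤ C) := by
  obtain ⟨k, rfl⟩ : ∃ k, n = p + k := ⟨n - p, by omega⟩
  have ⟨hxc, huc, _, _, hxpast, hupast, _, _, _, huderiv⟩ := hsol
  have ⟨_, _, hd, he, _⟩ := hH0
  obtain ⟨v, hv, hMv⟩ := hM.exists_pos_mulVec_pos
  have hdom : ∀ i : Fin p,
      ∑ j : Fin p, |a (Fin.castAdd k i) (Fin.castAdd k j)| * v j < μ (Fin.castAdd k i) * v i := by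
    intro i
    have := hMv i
    simp only [Matrix.mulVec, dotProduct, Matrix.of_apply, sub_mul, ite_mul, zero_mul,
      Finset.sum_sub_distrib, Finset.sum_ite_eq, Finset.mem_univ, if_true] at this
    exact sub_pos.mp this
  obtain ⟨V, hV⟩ := hsol.exists_forall_le_of_weighted_dominance hH0 hv hdom fun j =>
    exists_forall_lt_of_tendsto (hxc _) (hxpast _) (hext _ (by simp))
  intro i
  obtain ⟨C, hC⟩ := exists_forall_le_of_hasDerivAt_linear (he i) (hd i).le (huc i) (hupast i)
    (fun t _ => hV i t) (huderiv i)
  exact ⟨⟨V i, fun t _ => hV i t⟩, ⟨C, fun t _ => hC t⟩⟩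

theorem statement11 (n p : ℕ) (hp1 : 1 ≤ p) (hpn : p < n)
    (b : Fin n → ℝ) (a : Fin n → Fin n → ℝ)
    (μ c d e : Fin n → ℝ) (K : Fin n → Fin n → ℝ → ℝ) (G : Fin n → ℝ → ℝ)
    (hH0 : H0 n μ c d e K G)
    (hM : IsNonsingularMMatrix (Matrix.of fun i j : Fin p =>
      (if i = j then μ (Fin.castLE hpn.le i) else 0) -
        |a (Fin.castLE hpn.le i) (Fin.castLE hpn.le j)|))
    (x u : Fin n → ℝ → ℝ)
    (hsol : IsPositiveSolution n b a μ c d e K G x u)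
    (hext : ∀ q : Fin n, p ≤ (q : ℕ) →
      Filter.Tendsto (x q) Filter.atTop (nhds 0)) :
    ∀ i, (∃ C, ∀ t, (0:ℝ) ≤ t → x i t ≤ C) ∧
         (∃ C, ∀ t, (0:ℝ) ≤ t → u i t ≤ C) :=
  statement11_general n p hpn b a μ c d e K G hH0 hM x u hsol hext

end
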